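/- arXiv:2506.09711 — 2 statements merged into one kernel-verified Lean document; each statement's English description precedes it below -/
import Mathlib

section
/- Let $\|\cdot\|$ be a norm on $\mathbb{R}^m$ with dual norm $\|\cdot\|_*$, let $f: \mathbb{R}^m \to \mathbb{R}$ be differentiable and $\beta$-smooth with respect to $\|\cdot\|$, and suppose $g \in \mathbb{R}^m$ satisfies $\|g - \nabla f(\lambda)\|_* \le \gamma$. Define $\lambda^+$ as any minimizer of $\mu \mapsto f(\lambda) + g \cdot (\mu - \lambda) + \frac{\beta}{2}\|\mu - \lambda\|^2$. Then $f(\lambda^+) \le f(\lambda) - \frac{1}{4\beta}\|g\|_*^2 + \frac{\gamma^2}{\beta}$. -/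
/-- Dual norm (with respect to the Euclidean inner product) of a norm `ν`. -/
noncomputable def dualNorm {m : ℕ} (ν : EuclideanSpace ℝ (Fin m) → ℝ)
    (x : EuclideanSpace ℝ (Fin m)) : ℝ :=
  sSup {t : ℝ | ∃ z, ν z ≤ 1 ∧ t = (inner ℝ x z : ℝ)}

/-!
Write `d = λ⁺ - λ`, `‖·‖ = ν` and `G = ‖g‖_*`. Smoothness gives the descent inequality
`f λ⁺ ≤ f λ + ⟪∇f λ, d⟫ + β/2 ‖d‖²`, whose right side is the surrogate value at `λ⁺` plus the
error `⟪∇f λ - g, d⟫ ≤ γ ‖d‖`. Comparing `d` with the competitors `-(G/β) z`, `‖z‖ ≤ 1`, bounds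
the surrogate's minimum by `-G²/(2β)`; combined with `⟪g, d⟫ ≥ -G ‖d‖` this forces
`‖d‖ = G/β`, and Young's inequality `γ G/β ≤ G²/(4β) + γ²/β` finishes.
-/

open Metric Set RealInnerProductSpace

theorem Seminorm.exists_pos_mul_norm_le {E : Type*} [NormedAddCommGroup E] [NormedSpace ℝ E]
    [FiniteDimensional ℝ E] (p : Seminorm ℝ E) (hp : ∀ x, p x = 0 → x = 0) :
    ∃ c > 0, ∀ x, c * ‖x‖ ≤ p x := by
  obtain ⟨c, hc, hsphere⟩ : ∃ c > 0, ∀ u ∈ sphere (0 : E) 1, c ≤ p u := by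
    rcases (sphere (0 : E) 1).eq_empty_or_nonempty with h | h
    · exact ⟨1, one_pos, by simp [h]⟩
    obtain ⟨u₀, hu₀, hmin⟩ := (isCompact_sphere (0 : E) 1).exists_isMinOn h
      p.convexOn.locallyLipschitz.continuous.continuousOn
    refine ⟨p u₀, (apply_nonneg p u₀).lt_of_ne' fun h0 => ?_, hmin⟩
    simp [hp u₀ h0] at hu₀
  refine ⟨c, hc, fun x => ?_⟩
  rcases eq_or_ne x 0 with rfl | hx
  · simp
  have hx' : 0 < ‖x‖ := norm_pos_iff.2 hx
  have := hsphere (‖x‖⁻¹ • x) (by simp [norm_smul, hx'.ne'])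
  rw [map_smul_eq_mul, norm_inv, norm_norm, le_inv_mul_iff₀ hx'] at this
  linarith

section QuadraticModel

variable {E : Type*} [NormedAddCommGroup E] [InnerProductSpace ℝ E]

noncomputable def quadraticModel (p : Seminorm ℝ E) (g : E) (β : ℝ) (d : E) : ℝ :=
  ⟪g, d⟫ + β / 2 * p d ^ 2

theorem apply_le_add_quadraticModel [CompleteSpace E] (p : Seminorm ℝ E) {f : E → ℝ}
    {f' : E → E} (hf : ∀ x, HasGradientAt f (f' x) x) {β : ℝ}
    (hβ : ∀ x y, ⟪f' y - f' x, y - x⟫ ≤ β * p (y - x) ^ 2) (x y : E) :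
    f y ≤ f x + quadraticModel p (f' x) β (y - x) := by
  set d := y - x
  let φ : ℝ → ℝ := fun t => f (x + t • d) - t * ⟪f' x, d⟫ - β / 2 * t ^ 2 * p d ^ 2
  have hφ : ∀ t, HasDerivAt φ (⟪f' (x + t • d) - f' x, d⟫ - β * t * p d ^ 2) t := by
    intro t
    have hline : HasDerivAt (fun t : ℝ => x + t • d) d t := by
      simpa using ((hasDerivAt_id t).smul_const d).const_add x
    have hf_line := (hasGradientAt_iff_hasFDerivAt.1 (hf (x + t • d))).comp_hasDerivAt t hline
    simp only [Function.comp_def, InnerProductSpace.toDual_apply_apply] at hf_line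
    refine ((hf_line.sub ((hasDerivAt_id t).mul_const ⟪f' x, d⟫)).sub
      (((hasDerivAt_pow 2 t).const_mul (β / 2)).mul_const (p d ^ 2))).congr_deriv ?_
    simp only [inner_sub_left]
    ring
  have hφ_nonpos : ∀ t ∈ interior (Icc (0 : ℝ) 1),
      ⟪f' (x + t • d) - f' x, d⟫ - β * t * p d ^ 2 ≤ 0 := by
    intro t ht
    rw [interior_Icc] at ht
    have h : t * ⟪f' (x + t • d) - f' x, d⟫ ≤ t * (β * t * p d ^ 2) := by
      have := hβ x (x + t • d)
      rw [add_sub_cancel_left, real_inner_smul_right, map_smul_eq_mul,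
        Real.norm_of_nonneg ht.1.le] at this
      linarith
    linarith [le_of_mul_le_mul_left h ht.1]
  have hanti := antitoneOn_of_hasDerivWithinAt_nonpos (convex_Icc (0 : ℝ) 1)
    (fun t _ => (hφ t).continuousAt.continuousWithinAt) (fun t _ => (hφ t).hasDerivWithinAt)
    hφ_nonpos
  have h01 := hanti (left_mem_Icc.2 zero_le_one) (right_mem_Icc.2 zero_le_one) zero_le_one
  simp only [φ, zero_smul, add_zero, one_smul, add_sub_cancel, d] at h01
  simp only [quadraticModel, d]
  linarith

end QuadraticModel

section DualNorm

variable {m : ℕ} (p : Seminorm ℝ (EuclideanSpace ℝ (Fin m)))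

/- Without this bound the `sSup` in `dualNorm` would take the junk value `0`. -/
theorem bddAbove_inner_of_le_one (hp : ∀ x, p x = 0 → x = 0) (x : EuclideanSpace ℝ (Fin m)) :
    BddAbove {t : ℝ | ∃ z, p z ≤ 1 ∧ t = ⟪x, z⟫} := by
  obtain ⟨c, hc, hpc⟩ := p.exists_pos_mul_norm_le hp
  refine ⟨‖x‖ / c, ?_⟩
  rintro _ ⟨z, hz, rfl⟩
  have hzc : ‖z‖ ≤ 1 / c := by rw [le_div_iff₀' hc]; linarith [hpc z]
  calc ⟪x, z⟫ ≤ ‖x‖ * ‖z‖ := real_inner_le_norm x z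
    _ ≤ ‖x‖ * (1 / c) := by gcongr
    _ = ‖x‖ / c := by ring

theorem dualNorm_nonneg (hp : ∀ x, p x = 0 → x = 0) (x : EuclideanSpace ℝ (Fin m)) :
    0 ≤ dualNorm p x :=
  le_csSup (bddAbove_inner_of_le_one p hp x) ⟨0, by simp⟩

theorem dualNorm_le_of_forall_inner_le {x : EuclideanSpace ℝ (Fin m)} {B : ℝ}
    (h : ∀ z, p z ≤ 1 → ⟪x, z⟫ ≤ B) : dualNorm p x ≤ B :=
  csSup_le ⟨0, 0, by simp⟩ fun _ ⟨z, hz, ht⟩ => ht ▸ h z hz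

theorem inner_le_dualNorm_mul (hp : ∀ x, p x = 0 → x = 0) (x z : EuclideanSpace ℝ (Fin m)) :
    ⟪x, z⟫ ≤ dualNorm p x * p z := by
  rcases (apply_nonneg p z).eq_or_lt with hz | hz
  · simp [hp z hz.symm]
  have hw : ⟪x, (p z)⁻¹ • z⟫ ≤ dualNorm p x :=
    le_csSup (bddAbove_inner_of_le_one p hp x)
      ⟨_, by rw [map_smul_eq_mul, norm_inv, Real.norm_of_nonneg hz.le, inv_mul_cancel₀ hz.ne'], rfl⟩
  rw [real_inner_smul_right, inv_mul_le_iff₀ hz] at hw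
  linarith

theorem inner_sub_le_of_dualNorm_sub_le (hp : ∀ x, p x = 0 → x = 0)
    {f' : EuclideanSpace ℝ (Fin m) → EuclideanSpace ℝ (Fin m)} {β : ℝ}
    (hf' : ∀ x y, dualNorm p (f' x - f' y) ≤ β * p (x - y)) (x y : EuclideanSpace ℝ (Fin m)) :
    ⟪f' y - f' x, y - x⟫ ≤ β * p (y - x) ^ 2 :=
  calc ⟪f' y - f' x, y - x⟫ ≤ dualNorm p (f' y - f' x) * p (y - x) :=
        inner_le_dualNorm_mul p hp _ _
    _ ≤ β * p (y - x) * p (y - x) := by gcongr; exact hf' y x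
    _ = β * p (y - x) ^ 2 := by ring

theorem IsMinOn.quadraticModel_le (hp : ∀ x, p x = 0 → x = 0)
    {g d : EuclideanSpace ℝ (Fin m)} {β : ℝ} (hβ : 0 < β)
    (hd : IsMinOn (quadraticModel p g β) univ d) :
    quadraticModel p g β d ≤ -(dualNorm p g ^ 2 / (2 * β)) := by
  rcases (dualNorm_nonneg p hp g).eq_or_lt with hG | hG
  · simpa [← hG, quadraticModel] using hd (mem_univ 0)
  set G := dualNorm p g
  set q := quadraticModel p g β d
  have hs : 0 < G / β := div_pos hG hβ
  have hGq : G ≤ (G ^ 2 / 2 - β * q) / G := by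
    refine dualNorm_le_of_forall_inner_le p fun z hz => ?_
    have hpz : p (-((G / β) • z)) ≤ G / β := by
      rw [map_neg_eq_map, map_smul_eq_mul, Real.norm_of_nonneg hs.le]
      exact mul_le_of_le_one_right hs.le hz
    have hqz : q ≤ -(G / β * ⟪g, z⟫) + β / 2 * (G / β) ^ 2 :=
      calc q ≤ quadraticModel p g β (-((G / β) • z)) := hd (mem_univ _)
        _ ≤ _ := by
          rw [quadraticModel, inner_neg_right, real_inner_smul_right]
          gcongr
    rw [le_div_iff₀ hG]
    field_simp at hqz
    nlinarith
  rw [le_div_iff₀ hG] at hGq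
  rw [le_neg, div_le_iff₀ (by positivity)]
  nlinarith

theorem IsMinOn.seminorm_eq_dualNorm_div (hp : ∀ x, p x = 0 → x = 0)
    {g d : EuclideanSpace ℝ (Fin m)} {β : ℝ} (hβ : 0 < β)
    (hd : IsMinOn (quadraticModel p g β) univ d) :
    p d = dualNorm p g / β := by
  have hmin := hd.quadraticModel_le p hp hβ
  have hinner : -(dualNorm p g * p d) ≤ ⟪g, d⟫ := by
    have := inner_le_dualNorm_mul p hp g (-d)
    rw [inner_neg_right, map_neg_eq_map] at this
    linarith
  rw [quadraticModel, le_neg, div_le_iff₀ (by positivity)] at hmin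
  rw [eq_div_iff hβ.ne']
  nlinarith [sq_nonneg (β * p d - dualNorm p g)]

end DualNorm

theorem stmt15_general {m : ℕ} (ν : EuclideanSpace ℝ (Fin m) → ℝ)
    (hhom : ∀ (c : ℝ) y, ν (c • y) = |c| * ν y)
    (htri : ∀ y z, ν (y + z) ≤ ν y + ν z)
    (hdef : ∀ y, ν y = 0 → y = 0)
    (f : EuclideanSpace ℝ (Fin m) → ℝ)
    (f' : EuclideanSpace ℝ (Fin m) → EuclideanSpace ℝ (Fin m))
    (hgrad : ∀ x, HasGradientAt f (f' x) x)
    (β : ℝ) (hβ : 0 < β)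
    (hsmooth : ∀ x y, dualNorm ν (f' x - f' y) ≤ β * ν (x - y))
    (γ : ℝ)
    (lam g : EuclideanSpace ℝ (Fin m))
    (hg : dualNorm ν (g - f' lam) ≤ γ)
    (lamp : EuclideanSpace ℝ (Fin m))
    (hmin : ∀ μ : EuclideanSpace ℝ (Fin m),
      f lam + (inner ℝ g (lamp - lam) : ℝ) + β / 2 * (ν (lamp - lam)) ^ 2 ≤
        f lam + (inner ℝ g (μ - lam) : ℝ) + β / 2 * (ν (μ - lam)) ^ 2) :
    f lamp ≤ f lam - 1 / (4 * β) * (dualNorm ν g) ^ 2 + γ ^ 2 / β := by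
  let p : Seminorm ℝ (EuclideanSpace ℝ (Fin m)) :=
    Seminorm.of ν htri fun c y => by rw [hhom, Real.norm_eq_abs]
  change f lamp ≤ f lam - 1 / (4 * β) * dualNorm p g ^ 2 + γ ^ 2 / β
  set d := lamp - lam
  have hd : IsMinOn (quadraticModel p g β) univ d := isMinOn_univ_iff.2 fun e => by
    show ⟪g, d⟫ + β / 2 * ν d ^ 2 ≤ ⟪g, e⟫ + β / 2 * ν e ^ 2
    simpa [add_assoc] using hmin (lam + e)
  have hdescent := apply_le_add_quadraticModel p hgrad
    (inner_sub_le_of_dualNorm_sub_le p hdef hsmooth) lam lamp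
  have herr : ⟪f' lam - g, d⟫ ≤ γ * p d := by
    have := inner_le_dualNorm_mul p hdef (g - f' lam) (-d)
    rw [inner_neg_right, map_neg_eq_map, ← inner_neg_left, neg_sub] at this
    exact this.trans (by gcongr; exact hg)
  have hsplit : quadraticModel p (f' lam) β d = quadraticModel p g β d + ⟪f' lam - g, d⟫ := by
    rw [quadraticModel, quadraticModel, inner_sub_left]; ring
  have hmodel := hd.quadraticModel_le p hdef hβ
  rw [hd.seminorm_eq_dualNorm_div p hdef hβ] at herr
  set G := dualNorm p g
  calc f lamp ≤ f lam - G ^ 2 / (2 * β) + γ * (G / β) := by linarith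
    _ ≤ f lam - 1 / (4 * β) * G ^ 2 + γ ^ 2 / β := by
      have hyoung : γ * G ≤ G ^ 2 / 4 + γ ^ 2 := by nlinarith [sq_nonneg (γ - G / 2)]
      field_simp
      nlinarith

theorem stmt15 {m : ℕ} (ν : EuclideanSpace ℝ (Fin m) → ℝ)
    (hnn : ∀ y, 0 ≤ ν y)
    (hhom : ∀ (c : ℝ) y, ν (c • y) = |c| * ν y)
    (htri : ∀ y z, ν (y + z) ≤ ν y + ν z)
    (hdef : ∀ y, ν y = 0 → y = 0)
    (f : EuclideanSpace ℝ (Fin m) → ℝ)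
    (f' : EuclideanSpace ℝ (Fin m) → EuclideanSpace ℝ (Fin m))
    (hgrad : ∀ x, HasGradientAt f (f' x) x)
    (β : ℝ) (hβ : 0 < β)
    (hsmooth : ∀ x y, dualNorm ν (f' x - f' y) ≤ β * ν (x - y))
    (γ : ℝ) (hγ : 0 ≤ γ)
    (lam g : EuclideanSpace ℝ (Fin m))
    (hg : dualNorm ν (g - f' lam) ≤ γ)
    (lamp : EuclideanSpace ℝ (Fin m))
    (hmin : ∀ μ : EuclideanSpace ℝ (Fin m),
      f lam + (inner ℝ g (lamp - lam) : ℝ) + β / 2 * (ν (lamp - lam)) ^ 2 ≤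
        f lam + (inner ℝ g (μ - lam) : ℝ) + β / 2 * (ν (μ - lam)) ^ 2) :
    f lamp ≤ f lam - 1 / (4 * β) * (dualNorm ν g) ^ 2 + γ ^ 2 / β :=
  stmt15_general ν hhom htri hdef f f' hgrad β hβ hsmooth γ lam g hg lamp hmin
end

section
/- Let $f: \mathbb{R}^m \to \mathbb{R}$ be differentiable, bounded below by $-p_\star$, and suppose iterates $\lambda_0, \ldots, \lambda_T$ satisfy $\|g_t\|_*^2 \le 4\beta[f(\lambda_t) - f(\lambda_{t+1})] + 4\gamma^2$ and $\|g_t - \nabla f(\lambda_t)\|_* \le \gamma$ for $t = 0, \ldots, T-1$. Then there exists $t \in \{0, \ldots, T-1\}$ such that $\|\nabla f(\lambda_t)\|_* \le \gamma + \sqrt{\frac{4\beta}{T}[f(\lambda_0) + p_\star] + 4\gamma^2}$. -/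
open Metric

theorem exists_lt_le_of_le_mul_sub_succ_add {a F : ℕ → ℝ} {B C L : ℝ} {T : ℕ} (hT : 0 < T)
    (hB : 0 ≤ B) (hL : L ≤ F T) (ha : ∀ t < T, a t ≤ B * (F t - F (t + 1)) + C) :
    ∃ t < T, a t ≤ B / T * (F 0 - L) + C := by
  have hT' : (0 : ℝ) < T := Nat.cast_pos.mpr hT
  have hsum : ∑ t ∈ Finset.range T, a t ≤ ∑ _t ∈ Finset.range T, (B / T * (F 0 - L) + C) :=
    calc ∑ t ∈ Finset.range T, a t
        ≤ ∑ t ∈ Finset.range T, (B * (F t - F (t + 1)) + C) :=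
          Finset.sum_le_sum fun t ht => ha t (Finset.mem_range.mp ht)
      _ = B * (F 0 - F T) + T * C := by
          rw [Finset.sum_add_distrib, ← Finset.mul_sum, Finset.sum_range_sub', Finset.sum_const,
            Finset.card_range, nsmul_eq_mul]
      _ ≤ B * (F 0 - L) + T * C := by gcongr
      _ = ∑ _t ∈ Finset.range T, (B / T * (F 0 - L) + C) := by
          rw [Finset.sum_const, Finset.card_range, nsmul_eq_mul]
          field_simp
  obtain ⟨t, ht, hle⟩ := Finset.exists_le_of_sum_le ⟨0, Finset.mem_range.mpr hT⟩ hsum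
  exact ⟨t, Finset.mem_range.mp ht, hle⟩

namespace Seminorm

section NormedSpace

variable {E : Type*} [NormedAddCommGroup E] [NormedSpace ℝ E] [FiniteDimensional ℝ E]
  (p : Seminorm ℝ E)

protected theorem continuous_of_finiteDimensional : Continuous p :=
  p.convexOn.locallyLipschitz.continuous

theorem exists_pos_mul_norm_le_s16 (hp : ∀ y, p y = 0 → y = 0) : ∃ c > 0, ∀ z, c * ‖z‖ ≤ p z := by
  have hpos : ∀ u ∈ sphere (0 : E) 1, 0 < p u := fun u hu =>
    (apply_nonneg p u).lt_of_ne fun h => by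
      simp [hp u h.symm] at hu
  obtain ⟨c, hc, hmin⟩ := (isCompact_sphere (0 : E) 1).exists_forall_le'
    p.continuous_of_finiteDimensional.continuousOn hpos
  refine ⟨c, hc, fun z => ?_⟩
  rcases eq_or_ne z 0 with rfl | hz
  · simp
  have hnorm : 0 < ‖z‖ := norm_pos_iff.mpr hz
  have hu : ‖z‖⁻¹ • z ∈ sphere (0 : E) 1 := by
    simp [norm_smul, hnorm.ne']
  have hc_le := hmin _ hu
  rw [map_smul_eq_mul, Real.norm_of_nonneg (inv_nonneg.mpr hnorm.le), le_inv_mul_iff₀ hnorm]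
    at hc_le
  linarith

end NormedSpace

theorem bddAbove_inner_of_le_one {E : Type*} [NormedAddCommGroup E] [InnerProductSpace ℝ E]
    [FiniteDimensional ℝ E] (p : Seminorm ℝ E) (hp : ∀ y, p y = 0 → y = 0) (x : E) :
    BddAbove {t : ℝ | ∃ z, p z ≤ 1 ∧ t = (inner ℝ x z : ℝ)} := by
  obtain ⟨c, hc, hcle⟩ := p.exists_pos_mul_norm_le_s16 hp
  refine ⟨‖x‖ * c⁻¹, ?_⟩
  rintro _ ⟨z, hz, rfl⟩
  have hz_norm : ‖z‖ ≤ c⁻¹ := by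
    rw [← one_div, le_div_iff₀' hc]
    linarith [hcle z]
  exact (real_inner_le_norm x z).trans (by gcongr)

end Seminorm

section DualNorm

variable {m : ℕ} (p : Seminorm ℝ (EuclideanSpace ℝ (Fin m))) (hp : ∀ y, p y = 0 → y = 0)
include hp

theorem inner_le_dualNorm (x z : EuclideanSpace ℝ (Fin m)) (hz : p z ≤ 1) :
    inner ℝ x z ≤ dualNorm p x :=
  le_csSup (p.bddAbove_inner_of_le_one hp x) ⟨z, hz, rfl⟩

theorem dualNorm_add_le (x y : EuclideanSpace ℝ (Fin m)) :
    dualNorm p (x + y) ≤ dualNorm p x + dualNorm p y := by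
  refine csSup_le ⟨0, 0, by simp, by simp⟩ ?_
  rintro _ ⟨z, hz, rfl⟩
  rw [inner_add_left]
  exact add_le_add (inner_le_dualNorm p hp x z hz) (inner_le_dualNorm p hp y z hz)

theorem dualNorm_neg_le (x : EuclideanSpace ℝ (Fin m)) : dualNorm p (-x) ≤ dualNorm p x := by
  refine csSup_le ⟨0, 0, by simp, by simp⟩ ?_
  rintro _ ⟨z, hz, rfl⟩
  rw [inner_neg_left, ← inner_neg_right]
  exact inner_le_dualNorm p hp x (-z) (by rwa [map_neg_eq_map])

theorem dualNorm_le_sub_add (x y : EuclideanSpace ℝ (Fin m)) :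
    dualNorm p x ≤ dualNorm p (y - x) + dualNorm p y :=
  calc dualNorm p x = dualNorm p (-(y - x) + y) := by rw [neg_sub, sub_add_cancel]
    _ ≤ dualNorm p (-(y - x)) + dualNorm p y := dualNorm_add_le p hp _ _
    _ ≤ dualNorm p (y - x) + dualNorm p y := by gcongr; exact dualNorm_neg_le p hp _

end DualNorm

theorem stmt16_general {m : ℕ} (ν : EuclideanSpace ℝ (Fin m) → ℝ)
    (hhom : ∀ (c : ℝ) y, ν (c • y) = |c| * ν y)
    (htri : ∀ y z, ν (y + z) ≤ ν y + ν z)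
    (hdef : ∀ y, ν y = 0 → y = 0)
    (f : EuclideanSpace ℝ (Fin m) → ℝ)
    (f' : EuclideanSpace ℝ (Fin m) → EuclideanSpace ℝ (Fin m))
    (pstar β γ : ℝ) (hβ : 0 < β)
    (hlb : ∀ lam, -pstar ≤ f lam)
    (T : ℕ) (hT : 0 < T)
    (lam : ℕ → EuclideanSpace ℝ (Fin m)) (g : ℕ → EuclideanSpace ℝ (Fin m))
    (hdec : ∀ t < T, (dualNorm ν (g t)) ^ 2 ≤
      4 * β * (f (lam t) - f (lam (t + 1))) + 4 * γ ^ 2)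
    (herr : ∀ t < T, dualNorm ν (g t - f' (lam t)) ≤ γ) :
    ∃ t < T, dualNorm ν (f' (lam t)) ≤
      γ + Real.sqrt (4 * β / T * (f (lam 0) + pstar) + 4 * γ ^ 2) := by
  let p : Seminorm ℝ (EuclideanSpace ℝ (Fin m)) :=
    Seminorm.of ν htri fun c y => by rw [hhom, Real.norm_eq_abs]
  obtain ⟨t, htT, ht⟩ := exists_lt_le_of_le_mul_sub_succ_add hT (by positivity) (hlb (lam T)) hdec
  rw [sub_neg_eq_add] at ht
  refine ⟨t, htT, ?_⟩
  calc dualNorm ν (f' (lam t)) ≤ dualNorm ν (g t - f' (lam t)) + dualNorm ν (g t) :=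
        dualNorm_le_sub_add p hdef _ _
    _ ≤ γ + Real.sqrt (4 * β / T * (f (lam 0) + pstar) + 4 * γ ^ 2) :=
        add_le_add (herr t htT) (Real.le_sqrt_of_sq_le ht)

theorem stmt16 {m : ℕ} (ν : EuclideanSpace ℝ (Fin m) → ℝ)
    (hnn : ∀ y, 0 ≤ ν y)
    (hhom : ∀ (c : ℝ) y, ν (c • y) = |c| * ν y)
    (htri : ∀ y z, ν (y + z) ≤ ν y + ν z)
    (hdef : ∀ y, ν y = 0 → y = 0)
    (f : EuclideanSpace ℝ (Fin m) → ℝ)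
    (f' : EuclideanSpace ℝ (Fin m) → EuclideanSpace ℝ (Fin m))
    (hgrad : ∀ x, HasGradientAt f (f' x) x)
    (pstar β γ : ℝ) (hβ : 0 < β) (hγ : 0 < γ)
    (hlb : ∀ lam, -pstar ≤ f lam)
    (T : ℕ) (hT : 0 < T)
    (lam : ℕ → EuclideanSpace ℝ (Fin m)) (g : ℕ → EuclideanSpace ℝ (Fin m))
    (hdec : ∀ t < T, (dualNorm ν (g t)) ^ 2 ≤
      4 * β * (f (lam t) - f (lam (t + 1))) + 4 * γ ^ 2)
    (herr : ∀ t < T, dualNorm ν (g t - f' (lam t)) ≤ γ) :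
    ∃ t < T, dualNorm ν (f' (lam t)) ≤
      γ + Real.sqrt (4 * β / T * (f (lam 0) + pstar) + 4 * γ ^ 2) :=
  stmt16_general ν hhom htri hdef f f' pstar β γ hβ hlb T hT lam g hdec herr
end
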